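/- arXiv:1804.07281 — 8 statements merged into one kernel-verified Lean document; each statement's English description precedes it below -/
import Mathlib

section
/- Let E be a real Hilbert space with x ⪯ y defined by ⟨x,x⟩ ≤ ⟨x,y⟩. Then every nonempty subset P of E has a meet: there exists z with z ⪯ p for all p ∈ P, and for every y with y ⪯ p for all p ∈ P, one has y ⪯ z. In particular, if some nonzero x satisfies x ⪯ p for all p ∈ P, the meet is the unique point of smallest norm in the closed convex hull of P. -/
/-!
The meet is the point `z` of least norm in `K = closure (convexHull ℝ P)`. Its variational
inequality reads `⟪z, z⟫ ≤ ⟪z, w⟫` on `K`, i.e. `z ⪯ w` for every `w ∈ K`. Conversely a lower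
bound `y` of `P` puts `P` in the closed half-space `{w | ⟪y, y⟫ ≤ ⟪y, w⟫}`, which then contains
`K` and in particular `z`.
-/

open RealInnerProductSpace

section

variable {E : Type*} [NormedAddCommGroup E] [InnerProductSpace ℝ E]

theorem norm_le_norm_of_real_inner_self_le {z w : E} (h : ⟪z, z⟫ ≤ ⟪z, w⟫) :
    ‖z‖ ≤ ‖w‖ := by
  have hsq : ‖z‖ * ‖z‖ ≤ ‖z‖ * ‖w‖ :=
    calc ‖z‖ * ‖z‖ = ⟪z, z⟫ := (real_inner_self_eq_norm_mul_norm z).symm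
      _ ≤ ⟪z, w⟫ := h
      _ ≤ ‖z‖ * ‖w‖ := real_inner_le_norm z w
  rcases (norm_nonneg z).eq_or_lt with hz | hz
  · rw [← hz]
    exact norm_nonneg w
  · exact le_of_mul_le_mul_left hsq hz

theorem eq_of_real_inner_self_le_of_norm_le {z w : E} (h : ⟪z, z⟫ ≤ ⟪z, w⟫)
    (hw : ‖w‖ ≤ ‖z‖) : w = z := by
  have hdist : ‖w - z‖ ^ 2 = ‖w‖ ^ 2 - 2 * ⟪z, w⟫ + ‖z‖ ^ 2 := by
    rw [norm_sub_sq_real, real_inner_comm]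
  have hzz : ⟪z, z⟫ = ‖z‖ ^ 2 := real_inner_self_eq_norm_sq z
  have hzero : ‖w - z‖ ^ 2 ≤ 0 := by
    nlinarith [norm_nonneg w, norm_nonneg z]
  rw [← sub_eq_zero, ← norm_eq_zero]
  nlinarith [norm_nonneg (w - z)]

theorem exists_mem_forall_real_inner_self_le {K : Set E} (hne : K.Nonempty)
    (hK : IsComplete K) (hconv : Convex ℝ K) :
    ∃ z ∈ K, ∀ w ∈ K, ⟪z, z⟫ ≤ ⟪z, w⟫ := by
  obtain ⟨z, hzK, hmin⟩ := exists_norm_eq_iInf_of_complete_convex hne hK hconv 0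
  have hvar := (norm_eq_iInf_iff_real_inner_le_zero hconv hzK).mp hmin
  refine ⟨z, hzK, fun w hw => ?_⟩
  have := hvar w hw
  rw [zero_sub, inner_neg_left, inner_sub_right] at this
  linarith

theorem closure_convexHull_subset_setOf_le_inner {P : Set E} {y : E} {c : ℝ}
    (h : ∀ p ∈ P, c ≤ ⟪y, p⟫) : closure (convexHull ℝ P) ⊆ {w | c ≤ ⟪y, w⟫} :=
  closure_minimal
    (convexHull_min h (convex_halfSpace_ge (innerSL ℝ y).toLinearMap.isLinear c))
    (isClosed_le continuous_const (innerSL ℝ y).continuous)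

end

/-- In the inner-product sponge on a real Hilbert space, every nonempty subset
has a meet; and if some nonzero `x` is a left bound, the meet is the unique point of
smallest norm in the closed convex hull. -/
theorem stmt_4 {E : Type*} [NormedAddCommGroup E] [InnerProductSpace ℝ E] [CompleteSpace E]
    (P : Set E) (hP : P.Nonempty) :
    ∃ z : E, ((∀ p ∈ P, (inner ℝ z z : ℝ) ≤ inner ℝ z p) ∧
        ∀ y : E, (∀ p ∈ P, (inner ℝ y y : ℝ) ≤ inner ℝ y p) → (inner ℝ y y : ℝ) ≤ inner ℝ y z) ∧
      ((∃ x : E, x ≠ 0 ∧ ∀ p ∈ P, (inner ℝ x x : ℝ) ≤ inner ℝ x p) →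
        z ∈ closure (convexHull ℝ P) ∧
        (∀ w ∈ closure (convexHull ℝ P), ‖z‖ ≤ ‖w‖) ∧
        (∀ w ∈ closure (convexHull ℝ P), ‖w‖ ≤ ‖z‖ → w = z)) := by
  have hPK : P ⊆ closure (convexHull ℝ P) := (subset_convexHull ℝ P).trans subset_closure
  obtain ⟨z, hzK, hz⟩ := exists_mem_forall_real_inner_self_le (hP.mono hPK)
    isClosed_closure.isComplete (convex_convexHull ℝ P).closure
  refine ⟨z, ⟨fun p hp => hz p (hPK hp),
    fun y hy => closure_convexHull_subset_setOf_le_inner hy hzK⟩, fun _ => ⟨hzK, ?_, ?_⟩⟩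
  · exact fun w hw => norm_le_norm_of_real_inner_self_le (hz w hw)
  · exact fun w hw hwz => eq_of_real_inner_self_le_of_norm_le (hz w hw) hwz
end

section
/- Let S be a complete metric space, ⪯ an orientation on S that is topologically closed (as a subset of S × S), such that every left-bounded pair in S has a meet, and let h : S → ℝ be continuous and a discriminator. Then every nonempty right-bounded subset of S has a join. -/
/-!
The right bounds of `P` form a closed set `U`, directed downwards by meets, on which `h` is bounded
below by `h p` for any `p ∈ P` (a discriminator is strictly increasing along `⪯`). Along a
minimising sequence for `h` on `U`, any two terms have a common lower bound in `U`, whose `h`-value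
is at least the infimum, so the discriminator makes both terms close to it: the sequence is Cauchy.
Its limit `j` lies in `U` and minimises `h` there, and for any right bound `y` the meet `m` of `j`
and `y` lies in `U` with `h m ≤ h j`, which forces `m = j`, i.e. `j ⪯ y`.
-/

open Filter Topology Set

def IsDiscriminator {S : Type*} [MetricSpace S] (r : S → S → Prop) (h : S → ℝ) : Prop :=
  ∀ ε > (0 : ℝ), ∃ δ > (0 : ℝ), ∀ x y : S, r x y → h y < h x + δ → dist x y < ε

namespace IsDiscriminator

variable {S : Type*} [MetricSpace S] {r : S → S → Prop} {h : S → ℝ}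

theorem eq_of_le (hd : IsDiscriminator r h) {x y : S} (hxy : r x y) (hle : h y ≤ h x) :
    x = y := by
  by_contra hne
  obtain ⟨δ, hδ, H⟩ := hd (dist x y) (dist_pos.mpr hne)
  exact lt_irrefl _ (H x y hxy (by linarith))

theorem le_of_rel (hd : IsDiscriminator r h) {x y : S} (hxy : r x y) : h x ≤ h y := by
  by_contra! hlt
  obtain rfl := hd.eq_of_le hxy hlt.le
  exact lt_irrefl _ hlt

theorem cauchySeq_of_tendsto_lowerBound (hd : IsDiscriminator r h) {U : Set S}
    (hU : DirectedOn (flip r) U) {c : ℝ} (hc : ∀ w ∈ U, c ≤ h w) {u : ℕ → S}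
    (huU : ∀ n, u n ∈ U) (hu : Tendsto (h ∘ u) atTop (𝓝 c)) : CauchySeq u := by
  rw [Metric.cauchySeq_iff]
  intro ε hε
  obtain ⟨δ, hδ, H⟩ := hd (ε / 2) (half_pos hε)
  obtain ⟨N, hN⟩ := eventually_atTop.1 (hu.eventually (gt_mem_nhds (lt_add_of_pos_right c hδ)))
  refine ⟨N, fun m hm n hn => ?_⟩
  obtain ⟨w, hwU, hwm, hwn⟩ := hU _ (huU m) _ (huU n)
  have close : ∀ k ≥ N, r w (u k) → dist w (u k) < ε / 2 := fun k hk hwk =>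
    H _ _ hwk (by linarith [hN k hk, hc w hwU, show (h ∘ u) k = h (u k) from rfl])
  calc dist (u m) (u n) ≤ dist w (u m) + dist w (u n) := dist_triangle_left _ _ _
    _ < ε / 2 + ε / 2 := add_lt_add (close m hm hwm) (close n hn hwn)
    _ = ε := add_halves ε

variable [CompleteSpace S]

theorem exists_forall_le_of_isClosed (hd : IsDiscriminator r h) (hh : Continuous h) {U : Set S}
    (hUc : IsClosed U) (hUne : U.Nonempty) (hU : DirectedOn (flip r) U)
    (hbdd : BddBelow (h '' U)) : ∃ j ∈ U, ∀ w ∈ U, h j ≤ h w := by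
  obtain ⟨v, -, hv, hvU⟩ := exists_seq_tendsto_sInf (hUne.image h) hbdd
  choose u huU hu using hvU
  have hc : ∀ w ∈ U, sInf (h '' U) ≤ h w := fun w hw => csInf_le hbdd (mem_image_of_mem h hw)
  have hlim : Tendsto (h ∘ u) atTop (𝓝 (sInf (h '' U))) := by
    simpa only [Function.comp_def, hu] using hv
  obtain ⟨j, hj⟩ := cauchySeq_tendsto_of_complete (hd.cauchySeq_of_tendsto_lowerBound hU hc huU hlim)
  refine ⟨j, hUc.mem_of_tendsto hj (Eventually.of_forall huU), fun w hw => ?_⟩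
  rw [tendsto_nhds_unique ((hh.tendsto j).comp hj) hlim]
  exact hc w hw

theorem exists_least_of_isClosed (hd : IsDiscriminator r h) (hh : Continuous h) {U : Set S}
    (hUc : IsClosed U) (hUne : U.Nonempty) (hU : DirectedOn (flip r) U)
    (hbdd : BddBelow (h '' U)) : ∃ j ∈ U, ∀ y ∈ U, r j y := by
  obtain ⟨j, hjU, hjmin⟩ := hd.exists_forall_le_of_isClosed hh hUc hUne hU hbdd
  refine ⟨j, hjU, fun y hy => ?_⟩
  obtain ⟨m, hmU, hmj, hmy⟩ := hU j hjU y hy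
  rwa [hd.eq_of_le hmj (hjmin m hmU)] at hmy

end IsDiscriminator

theorem stmt_5_general {S : Type*} [MetricSpace S] [CompleteSpace S] (r : S → S → Prop)
    (hclosed : IsClosed {p : S × S | r p.1 p.2})
    (hmeet : ∀ x y : S, (∃ z, r z x ∧ r z y) →
      ∃ m, (r m x ∧ r m y) ∧ ∀ z, r z x → r z y → r z m)
    (h : S → ℝ) (hcont : Continuous h)
    (hdisc : ∀ ε > (0 : ℝ), ∃ δ > (0 : ℝ), ∀ x y : S, r x y → h y < h x + δ → dist x y < ε) :
    ∀ P : Set S, P.Nonempty → (∃ s, ∀ p ∈ P, r p s) →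
      ∃ j, (∀ p ∈ P, r p j) ∧ ∀ y, (∀ p ∈ P, r p y) → r j y := by
  rintro P ⟨p, hp⟩ ⟨s, hs⟩
  have hd : IsDiscriminator r h := hdisc
  let U : Set S := {u | ∀ q ∈ P, r q u}
  have hUc : IsClosed U := by
    simp only [U, ofPred_forall]
    exact isClosed_biInter fun q _ => hclosed.preimage (Continuous.prodMk_right q)
  have hU : DirectedOn (flip r) U := fun u hu v hv => by
    obtain ⟨m, ⟨hmu, hmv⟩, hmax⟩ := hmeet u v ⟨p, hu p hp, hv p hp⟩
    exact ⟨m, fun q hq => hmax q (hu q hq) (hv q hq), hmu, hmv⟩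
  have hbdd : BddBelow (h '' U) :=
    ⟨h p, forall_mem_image.2 fun u hu => hd.le_of_rel (hu p hp)⟩
  exact hd.exists_least_of_isClosed hcont hUc ⟨s, hs⟩ hU hbdd

/-- In a complete metric space with a topologically closed orientation in which
every left-bounded pair has a meet, and admitting a continuous discriminator `h`, every
nonempty right-bounded subset has a join. -/
theorem stmt_5 {S : Type*} [MetricSpace S] [CompleteSpace S] (r : S → S → Prop)
    (hrefl : ∀ x, r x x)
    (hanti : ∀ x y, r x y → r y x → x = y)
    (hclosed : IsClosed {p : S × S | r p.1 p.2})
    (hmeet : ∀ x y : S, (∃ z, r z x ∧ r z y) →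
      ∃ m, (r m x ∧ r m y) ∧ ∀ z, r z x → r z y → r z m)
    (h : S → ℝ) (hcont : Continuous h)
    (hdisc : ∀ ε > (0 : ℝ), ∃ δ > (0 : ℝ), ∀ x y : S, r x y → h y < h x + δ → dist x y < ε) :
    ∀ P : Set S, P.Nonempty → (∃ s, ∀ p ∈ P, r p s) →
      ∃ j, (∀ p ∈ P, r p j) ∧ ∀ y, (∀ p ∈ P, r p y) → r j y :=
  stmt_5_general r hclosed hmeet h hcont hdisc
end

section
/- Let ⪯ be an orientation on ℝ that is topologically closed, implies ≤ (x ⪯ y → x ≤ y), and such that every left-bounded pair has a meet. Then every nonempty right-bounded subset of ℝ (with respect to ⪯) has a join. -/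
/-! The set `U` of `⪯`-upper bounds of `P` is closed (the graph of `⪯` is) and bounded below by
any element of `P` (since `⪯` implies `≤`), so it contains its infimum `j`. For any `y ∈ U`, the
meet `m` of `j` and `y` is again in `U`, hence `j ≤ m`; together with `m ⪯ j`, this forces
`m = j` and so `j ⪯ y`. -/

theorem isClosed_setOf_forall_rel {X : Type*} [TopologicalSpace X] {r : X → X → Prop}
    (hr : IsClosed {q : X × X | r q.1 q.2}) (P : Set X) : IsClosed {y | ∀ p ∈ P, r p y} := by
  simp only [Set.ofPred_forall]
  exact isClosed_biInter fun p _ => hr.preimage (Continuous.prodMk_right p)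

theorem rel_of_le_of_forall_rel {α : Type*} [PartialOrder α] {r : α → α → Prop}
    (hle : ∀ x y, r x y → x ≤ y)
    (hmeet : ∀ x y : α, (∃ z, r z x ∧ r z y) →
      ∃ m, (r m x ∧ r m y) ∧ ∀ z, r z x → r z y → r z m)
    {P : Set α} (hP : P.Nonempty) {j : α} (hj : ∀ p ∈ P, r p j)
    (hj_le : ∀ y, (∀ p ∈ P, r p y) → j ≤ y) {y : α} (hy : ∀ p ∈ P, r p y) : r j y := by
  obtain ⟨p₀, hp₀⟩ := hP
  obtain ⟨m, ⟨hmj, hmy⟩, hm⟩ := hmeet j y ⟨p₀, hj p₀ hp₀, hy p₀ hp₀⟩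
  have hm_eq : m = j := le_antisymm (hle _ _ hmj) (hj_le m fun p hp => hm p (hj p hp) (hy p hp))
  rwa [hm_eq] at hmy

theorem stmt_7_general (r : ℝ → ℝ → Prop)
    (hclosed : IsClosed {p : ℝ × ℝ | r p.1 p.2})
    (hle : ∀ x y, r x y → x ≤ y)
    (hmeet : ∀ x y : ℝ, (∃ z, r z x ∧ r z y) →
      ∃ m, (r m x ∧ r m y) ∧ ∀ z, r z x → r z y → r z m) :
    ∀ P : Set ℝ, P.Nonempty → (∃ s, ∀ p ∈ P, r p s) →
      ∃ j, (∀ p ∈ P, r p j) ∧ ∀ y, (∀ p ∈ P, r p y) → r j y := by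
  intro P hP hU
  set U : Set ℝ := {y | ∀ p ∈ P, r p y}
  have hU_bdd : BddBelow U := ⟨hP.some, fun y hy => hle _ _ (hy _ hP.some_mem)⟩
  have hinf : sInf U ∈ U := (isClosed_setOf_forall_rel hclosed P).csInf_mem hU hU_bdd
  exact ⟨sInf U, hinf, fun y hy =>
    rel_of_le_of_forall_rel hle hmeet hP hinf (fun _ hz => csInf_le hU_bdd hz) hy⟩

/-- A topologically closed orientation on ℝ which implies ≤ and has meets of
left-bounded pairs has joins of all nonempty right-bounded subsets. -/
theorem stmt_7 (r : ℝ → ℝ → Prop)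
    (hrefl : ∀ x, r x x)
    (hanti : ∀ x y, r x y → r y x → x = y)
    (hclosed : IsClosed {p : ℝ × ℝ | r p.1 p.2})
    (hle : ∀ x y, r x y → x ≤ y)
    (hmeet : ∀ x y : ℝ, (∃ z, r z x ∧ r z y) →
      ∃ m, (r m x ∧ r m y) ∧ ∀ z, r z x → r z y → r z m) :
    ∀ P : Set ℝ, P.Nonempty → (∃ s, ∀ p ∈ P, r p s) →
      ∃ j, (∀ p ∈ P, r p j) ∧ ∀ y, (∀ p ∈ P, r p y) → r j y :=
  stmt_7_general r hclosed hle hmeet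
end

section
/- Let (G, ⪯) be an oriented group and H a subgroup of G with positive cone C = {x : 1 ⪯ x}. Define a relation ⊑ on the left coset space G/H by x̄ ⊑ ȳ iff x⁻¹·y ∈ C·H. Then ⊑ is reflexive and antisymmetric (an orientation on G/H) if and only if for all q, r ∈ G: 1 ⪯ q, 1 ⪯ r, and q·r ∈ H imply q ∈ H and r ∈ H. -/
open scoped Pointwise

/-!
If `q, r ≥ 1` with `q * r ∈ H`, then `1⁻¹ * q = q * 1` and `q⁻¹ * 1 = r * (q * r)⁻¹` both lie in
`C * H`, so antisymmetry forces `q̄ = 1̄`. Conversely, if `x⁻¹ * y = c₁ * h₁` and `y⁻¹ * x = c₂ * h₂`,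
then `c₁ * (h₁ * c₂ * h₁⁻¹) = (h₁ * h₂)⁻¹ ∈ H`, and the conjugate `h₁ * c₂ * h₁⁻¹` is again positive by
bi-invariance; the hypothesis gives `c₁ ∈ H`, hence `x⁻¹ * y ∈ H`.
-/

section CosetRelation

variable {G : Type*} [Group G] {C : Set G} {H : Subgroup G}

theorem inv_mul_self_mem_mul_subgroup (hC : (1 : G) ∈ C) (x : G) : x⁻¹ * x ∈ C * (H : Set G) := by
  simpa using Set.mul_mem_mul hC H.one_mem

theorem mem_subgroup_of_mk_eq_of_mem_mul
    (hanti : ∀ x y : G, x⁻¹ * y ∈ C * (H : Set G) → y⁻¹ * x ∈ C * (H : Set G) →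
      (QuotientGroup.mk x : G ⧸ H) = QuotientGroup.mk y)
    {q r : G} (hq : q ∈ C) (hr : r ∈ C) (hqr : q * r ∈ H) : q ∈ H ∧ r ∈ H := by
  have hq_le : (1 : G)⁻¹ * q ∈ C * (H : Set G) := ⟨q, hq, 1, H.one_mem, by group⟩
  have hq_ge : q⁻¹ * 1 ∈ C * (H : Set G) := ⟨r, hr, (q * r)⁻¹, H.inv_mem hqr, by group⟩
  have hqH : q ∈ H := by simpa using QuotientGroup.eq.mp (hanti 1 q hq_le hq_ge)
  exact ⟨hqH, by simpa using H.mul_mem (H.inv_mem hqH) hqr⟩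

theorem mk_eq_of_mem_mul_of_mem_mul
    (hconj : ∀ c ∈ C, ∀ h ∈ H, h * c * h⁻¹ ∈ C)
    (hcond : ∀ q r : G, q ∈ C → r ∈ C → q * r ∈ H → q ∈ H ∧ r ∈ H)
    {x y : G} (hxy : x⁻¹ * y ∈ C * (H : Set G)) (hyx : y⁻¹ * x ∈ C * (H : Set G)) :
    (QuotientGroup.mk x : G ⧸ H) = QuotientGroup.mk y := by
  obtain ⟨c₁, hc₁, h₁, hh₁, he₁⟩ := Set.mem_mul.mp hxy
  obtain ⟨c₂, hc₂, h₂, hh₂, he₂⟩ := Set.mem_mul.mp hyx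
  have hprod : c₁ * (h₁ * c₂ * h₁⁻¹) ∈ H := by
    have heq : c₁ * (h₁ * c₂ * h₁⁻¹) = (c₁ * h₁) * (c₂ * h₂) * (h₁ * h₂)⁻¹ := by group
    rw [heq, he₁, he₂, ← mul_assoc, mul_inv_cancel_right, inv_mul_cancel, one_mul]
    exact H.inv_mem (H.mul_mem hh₁ hh₂)
  have hc₁H := (hcond c₁ _ hc₁ (hconj c₂ hc₂ h₁ hh₁) hprod).1
  rw [QuotientGroup.eq, ← he₁]
  exact H.mul_mem hc₁H hh₁

end CosetRelation

theorem one_le_conj {G : Type*} [Group G] {le : G → G → Prop}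
    (hinv : ∀ x y z : G, le x y → le (x * z) (y * z) ∧ le (z * x) (z * y))
    {c : G} (hc : le 1 c) (g : G) : le 1 (g * c * g⁻¹) := by
  simpa using (hinv (g * 1) (g * c) g⁻¹ (hinv 1 c g hc).2).1

theorem stmt_11_general {G : Type*} [Group G] (le : G → G → Prop)
    (hrefl : ∀ x, le x x)
    (hinv : ∀ x y z : G, le x y → le (x * z) (y * z) ∧ le (z * x) (z * y))
    (H : Subgroup G) (C : Set G) (hC : C = {x : G | le 1 x}) :
    ((∀ x : G, x⁻¹ * x ∈ C * (H : Set G)) ∧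
      (∀ x y : G, x⁻¹ * y ∈ C * (H : Set G) → y⁻¹ * x ∈ C * (H : Set G) →
        (QuotientGroup.mk x : G ⧸ H) = QuotientGroup.mk y)) ↔
    (∀ q r : G, le 1 q → le 1 r → q * r ∈ H → q ∈ H ∧ r ∈ H) := by
  subst hC
  refine ⟨fun ⟨_, hanti⟩ q r => mem_subgroup_of_mk_eq_of_mem_mul hanti, fun hcond => ⟨?_, ?_⟩⟩
  · exact inv_mul_self_mem_mul_subgroup (hrefl 1)
  · exact fun x y => mk_eq_of_mem_mul_of_mem_mul
      (fun c (hc : le 1 c) h _ => one_le_conj hinv hc h) hcond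

/-- For an oriented group `(G, ⪯)` with positive cone `C` and a subgroup `H`,
the relation `x̄ ⊑ ȳ ↔ x⁻¹·y ∈ C·H` on the left coset space `G/H` is reflexive and
antisymmetric iff `1 ⪯ q`, `1 ⪯ r`, `q·r ∈ H` imply `q ∈ H` and `r ∈ H`. -/
theorem stmt_11 {G : Type*} [Group G] (le : G → G → Prop)
    (hrefl : ∀ x, le x x)
    (hanti : ∀ x y, le x y → le y x → x = y)
    (hinv : ∀ x y z : G, le x y → le (x * z) (y * z) ∧ le (z * x) (z * y))
    (H : Subgroup G) (C : Set G) (hC : C = {x : G | le 1 x}) :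
    ((∀ x : G, x⁻¹ * x ∈ C * (H : Set G)) ∧
      (∀ x y : G, x⁻¹ * y ∈ C * (H : Set G) → y⁻¹ * x ∈ C * (H : Set G) →
        (QuotientGroup.mk x : G ⧸ H) = QuotientGroup.mk y)) ↔
    (∀ q r : G, le 1 q → le 1 r → q * r ∈ H → q ∈ H ∧ r ∈ H) :=
  stmt_11_general le hrefl hinv H C hC
end

section
/- Let E be a real Hilbert space of dimension ≥ 2, h a unit vector in E, and f : ℝ≥0 → ℝ≥0. Define C_f = {x ∈ E : f(‖x − ⟨x,h⟩h‖) ≤ ⟨x,h⟩} and x ⪯_f y iff y − x ∈ C_f. Then ⪯_f is reflexive and antisymmetric (so (E, ⪯_f, +) is an oriented abelian group) if and only if f(0) = 0 and f(d) > 0 for all d > 0. -/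
/-!
Write `C = {x | f ‖x - ⟪x, h⟫ h‖ ≤ ⟪x, h⟫}`, so that `x ⪯_f y ↔ y - x ∈ C`. Reflexivity is
`0 ∈ C`, i.e. `f 0 = 0`, and antisymmetry is `C ∩ -C = {0}`. Since `f ≥ 0`, both `x` and `-x` lie
in `C` exactly when `⟪x, h⟫ = 0` and `f ‖x‖ = 0`. As `dim E ≥ 2`, the hyperplane `hᗮ` contains
vectors of every norm `d`, so `C ∩ -C = {0}` says precisely that `f` vanishes only at `0`.
-/

open scoped NNReal RealInnerProductSpace

lemma Submodule.exists_mem_orthogonal_span_singleton_ne_zero {𝕜 E : Type*} [RCLike 𝕜]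
    [NormedAddCommGroup E] [InnerProductSpace 𝕜 E] (hdim : 2 ≤ Module.rank 𝕜 E) (h : E) :
    ∃ v ∈ (𝕜 ∙ h)ᗮ, v ≠ 0 := by
  refine Submodule.exists_mem_ne_zero_of_ne_bot fun hbot => ?_
  have hrank : Module.rank 𝕜 E ≤ 1 := by
    rw [← rank_top 𝕜 E, ← Submodule.orthogonal_eq_bot_iff.mp hbot]
    simpa using rank_span_le (R := 𝕜) ({h} : Set E)
  exact absurd (hdim.trans hrank) (by norm_num)

lemma exists_inner_eq_zero_norm_eq {E : Type*} [NormedAddCommGroup E] [InnerProductSpace ℝ E]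
    (hdim : 2 ≤ Module.rank ℝ E) (h : E) {d : ℝ} (hd : 0 ≤ d) :
    ∃ w : E, ⟪w, h⟫ = 0 ∧ ‖w‖ = d := by
  obtain ⟨v, hv, hv0⟩ := Submodule.exists_mem_orthogonal_span_singleton_ne_zero hdim h
  have hvh : ⟪v, h⟫ = 0 := Submodule.mem_orthogonal_singleton_iff_inner_left.mp hv
  refine ⟨(d / ‖v‖) • v, by rw [real_inner_smul_left, hvh, mul_zero], ?_⟩
  rw [norm_smul, Real.norm_of_nonneg (by positivity), div_mul_cancel₀ _ (norm_ne_zero_iff.mpr hv0)]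

lemma AddGroup.antisymm_sub_mem_iff {G : Type*} [AddGroup G] (C : Set G) :
    (∀ x y : G, y - x ∈ C → x - y ∈ C → x = y) ↔ ∀ z : G, z ∈ C → -z ∈ C → z = 0 := by
  refine ⟨fun H z hz hnz => ?_, fun H x y hxy hyx => ?_⟩
  · exact (H 0 z (by simpa using hz) (by simpa using hnz)).symm
  · exact (sub_eq_zero.mp (H _ hxy (by rwa [neg_sub]))).symm

section EpigraphCone

variable {E : Type*} [NormedAddCommGroup E] [InnerProductSpace ℝ E]

def epigraphCone (f : ℝ≥0 → ℝ≥0) (h : E) : Set E :=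
  {x | (f ‖x - ⟪x, h⟫ • h‖₊ : ℝ) ≤ ⟪x, h⟫}

variable {f : ℝ≥0 → ℝ≥0} {h : E}

lemma mem_epigraphCone_of_inner_eq_zero {x : E} (hx : ⟪x, h⟫ = 0) :
    x ∈ epigraphCone f h ↔ f ‖x‖₊ = 0 := by
  change (f ‖x - ⟪x, h⟫ • h‖₊ : ℝ) ≤ ⟪x, h⟫ ↔ _
  rw [hx, zero_smul, sub_zero]
  exact_mod_cast nonpos_iff_eq_zero

lemma zero_mem_epigraphCone_iff : (0 : E) ∈ epigraphCone f h ↔ f 0 = 0 := by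
  rw [mem_epigraphCone_of_inner_eq_zero (inner_zero_left h), nnnorm_zero]

lemma mem_epigraphCone_and_neg_mem_iff {x : E} :
    x ∈ epigraphCone f h ∧ -x ∈ epigraphCone f h ↔ ⟪x, h⟫ = 0 ∧ f ‖x‖₊ = 0 := by
  constructor
  · rintro ⟨hx, hnx⟩
    -- both `⟪x, h⟫` and `⟪-x, h⟫` dominate a value of `f`, hence are nonnegative
    have hxh : ⟪x, h⟫ = 0 := by
      have h₁ := (f _).coe_nonneg.trans hx
      have h₂ := (f _).coe_nonneg.trans hnx
      rw [inner_neg_left] at h₂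
      linarith
    exact ⟨hxh, (mem_epigraphCone_of_inner_eq_zero hxh).mp hx⟩
  · rintro ⟨hxh, hfx⟩
    have hnxh : ⟪-x, h⟫ = 0 := by rw [inner_neg_left, hxh, neg_zero]
    exact ⟨(mem_epigraphCone_of_inner_eq_zero hxh).mpr hfx,
      (mem_epigraphCone_of_inner_eq_zero hnxh).mpr (by rwa [nnnorm_neg])⟩

lemma epigraphCone_pointed_iff (hdim : 2 ≤ Module.rank ℝ E) :
    (∀ x : E, x ∈ epigraphCone f h → -x ∈ epigraphCone f h → x = 0) ↔
      ∀ d : ℝ≥0, 0 < d → 0 < f d := by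
  rw [forall_congr' fun x => by rw [← and_imp, mem_epigraphCone_and_neg_mem_iff, and_imp]]
  constructor
  · intro H d hd
    obtain ⟨w, hwh, hwd⟩ := exists_inner_eq_zero_norm_eq hdim h d.coe_nonneg
    have hwd' : ‖w‖₊ = d := NNReal.eq hwd
    refine pos_iff_ne_zero.mpr fun hfd => hd.ne' ?_
    rw [← hwd', H w hwh (by rw [hwd', hfd]), nnnorm_zero]
  · intro H x _ hfx
    by_contra hx
    exact (H _ (nnnorm_pos.mpr hx)).ne' hfx

end EpigraphCone

theorem stmt_13_general {E : Type*} [NormedAddCommGroup E] [InnerProductSpace ℝ E]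
    (hdim : 2 ≤ Module.rank ℝ E)
    (h : E) (f : ℝ≥0 → ℝ≥0)
    (le_f : E → E → Prop)
    (hle_f : ∀ x y : E, le_f x y ↔
      (f ‖(y - x) - (inner ℝ (y - x) h : ℝ) • h‖₊ : ℝ) ≤ (inner ℝ (y - x) h : ℝ)) :
    ((∀ x : E, le_f x x) ∧ (∀ x y : E, le_f x y → le_f y x → x = y)) ↔
      (f 0 = 0 ∧ ∀ d : ℝ≥0, 0 < d → 0 < f d) := by
  have hle : ∀ x y, le_f x y ↔ y - x ∈ epigraphCone f h := hle_f
  simp only [hle, sub_self]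
  rw [forall_const, zero_mem_epigraphCone_iff, AddGroup.antisymm_sub_mem_iff,
    epigraphCone_pointed_iff hdim]

/-- The epigraph relation `x ⪯_f y ↔ y - x ∈ C_f` on a real Hilbert space of
dimension ≥ 2 is reflexive and antisymmetric iff `f 0 = 0` and `f d > 0` for `d > 0`. -/
theorem stmt_13 {E : Type*} [NormedAddCommGroup E] [InnerProductSpace ℝ E] [CompleteSpace E]
    (hdim : 2 ≤ Module.rank ℝ E)
    (h : E) (hh : ‖h‖ = 1) (f : ℝ≥0 → ℝ≥0)
    (le_f : E → E → Prop)
    (hle_f : ∀ x y : E, le_f x y ↔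
      (f ‖(y - x) - (inner ℝ (y - x) h : ℝ) • h‖₊ : ℝ) ≤ (inner ℝ (y - x) h : ℝ)) :
    ((∀ x : E, le_f x x) ∧ (∀ x y : E, le_f x y → le_f y x → x = y)) ↔
      (f 0 = 0 ∧ ∀ d : ℝ≥0, 0 < d → 0 < f d) :=
  stmt_13_general hdim h f le_f hle_f
end

section
/- Let E be a real Hilbert space of dimension ≥ 2, h a unit vector, and f : ℝ≥0 → ℝ≥0 with f(0)=0 and f(d)>0 for d>0. Then the relation x ⪯_f y ≡ f(‖y_⊥ − x_⊥‖) ≤ y_h − x_h is topologically closed in E × E if and only if f is lower semicontinuous. -/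
/-!
The relation is the preimage of the cone `C_f` under `(x, y) ↦ y - x`, so it is closed iff `C_f`
is. The continuous map `w ↦ (‖w_⊥‖, w_h)` pulls the epigraph of `f` back to `C_f`; conversely,
for a unit vector `u ⊥ h` (which exists as `dim E ≥ 2`), the map `(e, t) ↦ e • u + t • h` pulls
`C_f` back to the epigraph of `f`. Hence `C_f` is closed iff the epigraph of `f` is, i.e. iff `f`
is lower semicontinuous.
-/

open scoped NNReal

theorem NNReal.lowerSemicontinuous_coe_comp_iff {α : Type*} [TopologicalSpace α] {f : α → ℝ≥0} :
    LowerSemicontinuous (fun x => (f x : ℝ)) ↔ LowerSemicontinuous f := by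
  refine ⟨fun hf => ?_, fun hf => NNReal.continuous_coe.comp_lowerSemicontinuous hf NNReal.coe_mono⟩
  simpa [Function.comp_def] using
    continuous_real_toNNReal.comp_lowerSemicontinuous hf fun _ _ => Real.toNNReal_le_toNNReal

theorem isClosed_setOf_sub_mem_iff {G : Type*} [TopologicalSpace G] [AddGroup G] [ContinuousSub G]
    {C : Set G} : IsClosed {p : G × G | p.2 - p.1 ∈ C} ↔ IsClosed C := by
  refine ⟨fun hC => ?_, fun hC => hC.preimage (by fun_prop)⟩
  simpa using hC.preimage (Continuous.prodMk_right (0 : G))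

section InnerProductSpace

variable {E : Type*} [NormedAddCommGroup E] [InnerProductSpace ℝ E]

theorem exists_norm_eq_one_inner_eq_zero (hdim : 2 ≤ Module.rank ℝ E) (h : E) :
    ∃ u : E, ‖u‖ = 1 ∧ inner ℝ u h = 0 := by
  have hspan : (ℝ ∙ h) ≠ ⊤ := by
    intro htop
    have : Module.rank ℝ E ≤ 1 :=
      calc Module.rank ℝ E = Module.rank ℝ (ℝ ∙ h) := by rw [htop, rank_top]
        _ ≤ 1 := by simpa using rank_span_le (R := ℝ) ({h} : Set E)
    exact absurd (hdim.trans this) (by norm_num)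
  obtain ⟨v, hv, hv0⟩ :=
    Submodule.exists_mem_ne_zero_of_ne_bot (mt Submodule.orthogonal_eq_bot_iff.1 hspan)
  refine ⟨(‖v‖⁻¹ : ℝ) • v, norm_smul_inv_norm hv0, ?_⟩
  rw [real_inner_smul_left, Submodule.mem_orthogonal_singleton_iff_inner_left.1 hv, mul_zero]

/-- The cone `C_f`, with `w_h = ⟪w, h⟫` and `w_⊥ = w - w_h • h`. -/
def epiCone (f : ℝ≥0 → ℝ≥0) (h : E) : Set E :=
  {w | (f ‖w - inner ℝ w h • h‖₊ : ℝ) ≤ inner ℝ w h}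

theorem isClosed_epiCone {f : ℝ≥0 → ℝ≥0} (hf : LowerSemicontinuous f) (h : E) :
    IsClosed (epiCone f h) :=
  (lowerSemicontinuous_iff_isClosed_epigraph.1
    (NNReal.lowerSemicontinuous_coe_comp_iff.2 hf)).preimage
    (f := fun w => (‖w - inner ℝ w h • h‖₊, inner ℝ w h)) (by fun_prop)

theorem preimage_epiCone {h u : E} (hh : ‖h‖ = 1) (hu : ‖u‖ = 1) (huh : inner ℝ u h = 0)
    (f : ℝ≥0 → ℝ≥0) :
    (fun p : ℝ≥0 × ℝ => (p.1 : ℝ) • u + p.2 • h) ⁻¹' epiCone f h = {p | (f p.1 : ℝ) ≤ p.2} := by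
  ext ⟨e, t⟩
  have hinner : inner ℝ ((e : ℝ) • u + t • h) h = t := by
    simp [inner_add_left, real_inner_smul_left, huh, hh]
  have hperp : ‖(e : ℝ) • u‖₊ = e := by
    ext; simp [norm_smul, hu]
  simp only [epiCone, Set.mem_preimage, Set.mem_ofPred_eq, hinner, add_sub_cancel_right, hperp]

theorem lowerSemicontinuous_of_isClosed_epiCone {f : ℝ≥0 → ℝ≥0} {h u : E} (hh : ‖h‖ = 1)
    (hu : ‖u‖ = 1) (huh : inner ℝ u h = 0) (hC : IsClosed (epiCone f h)) :
    LowerSemicontinuous f := by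
  rw [← NNReal.lowerSemicontinuous_coe_comp_iff, lowerSemicontinuous_iff_isClosed_epigraph,
    ← preimage_epiCone hh hu huh]
  exact hC.preimage (by fun_prop)

end InnerProductSpace

theorem stmt_14_general {E : Type*} [NormedAddCommGroup E] [InnerProductSpace ℝ E]
    (hdim : 2 ≤ Module.rank ℝ E)
    (h : E) (hh : ‖h‖ = 1) (f : ℝ≥0 → ℝ≥0)
    (le_f : E → E → Prop)
    (hle_f : ∀ x y : E, le_f x y ↔
      (f ‖(y - x) - (inner ℝ (y - x) h : ℝ) • h‖₊ : ℝ) ≤ (inner ℝ (y - x) h : ℝ)) :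
    IsClosed {p : E × E | le_f p.1 p.2} ↔ LowerSemicontinuous f := by
  have hrel : {p : E × E | le_f p.1 p.2} = {p | p.2 - p.1 ∈ epiCone f h} := by
    ext p; exact hle_f p.1 p.2
  obtain ⟨u, hu, huh⟩ := exists_norm_eq_one_inner_eq_zero hdim h
  rw [hrel, isClosed_setOf_sub_mem_iff]
  exact ⟨lowerSemicontinuous_of_isClosed_epiCone hh hu huh, fun hf => isClosed_epiCone hf h⟩

/-- The epigraph relation `⪯_f` is topologically closed in `E × E` iff `f` is
lower semicontinuous. -/
theorem stmt_14 {E : Type*} [NormedAddCommGroup E] [InnerProductSpace ℝ E] [CompleteSpace E]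
    (hdim : 2 ≤ Module.rank ℝ E)
    (h : E) (hh : ‖h‖ = 1) (f : ℝ≥0 → ℝ≥0)
    (hf0 : f 0 = 0) (hfpos : ∀ d : ℝ≥0, 0 < d → 0 < f d)
    (le_f : E → E → Prop)
    (hle_f : ∀ x y : E, le_f x y ↔
      (f ‖(y - x) - (inner ℝ (y - x) h : ℝ) • h‖₊ : ℝ) ≤ (inner ℝ (y - x) h : ℝ)) :
    IsClosed {p : E × E | le_f p.1 p.2} ↔ LowerSemicontinuous f :=
  stmt_14_general hdim h hh f le_f hle_f
end

section
/- Let V be a real inner product space, f : ℝ≥0 → ℝ≥0 square-superadditive, lower semicontinuous, and increasing, and let p, q ∈ V with ⟨p,q⟩ ≥ 0 and q ≠ 0. Then f⁺(‖p‖) + f(‖q‖) ≤ f(‖p+q‖), where f⁺(x) = lim_{e↓x} f(e). -/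
/-!
Since `⟪p, q⟫ ≥ 0`, every `y < ‖q‖` has `‖p‖² + y² < ‖p + q‖²`, so `x = √(‖p + q‖² - y²)` exceeds
`‖p‖` and square-superadditivity gives `f⁺(‖p‖) + f y ≤ f x + f y ≤ f ‖p + q‖`. Letting `y ↑ ‖q‖`,
lower semicontinuity of `f` at `‖q‖ > 0` yields the claim.
-/

open scoped NNReal

open Set

theorem nnnorm_sq_add_nnnorm_sq_le_of_inner_nonneg {V : Type*} [NormedAddCommGroup V]
    [InnerProductSpace ℝ V] {p q : V} (hpq : 0 ≤ inner ℝ p q) :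
    ‖p‖₊ ^ 2 + ‖q‖₊ ^ 2 ≤ ‖p + q‖₊ ^ 2 := by
  rw [← NNReal.coe_le_coe]
  push_cast [coe_nnnorm]
  linarith [norm_add_sq_real p q]

theorem sInf_image_Ioi_add_le_of_sq_add_sq_lt {f : ℝ≥0 → ℝ≥0}
    (hsq : ∀ x y : ℝ≥0, f x + f y ≤ f (NNReal.sqrt (x ^ 2 + y ^ 2)))
    {a y c : ℝ≥0} (h : a ^ 2 + y ^ 2 < c ^ 2) :
    sInf (f '' Ioi a) + f y ≤ f c := by
  set x := NNReal.sqrt (c ^ 2 - y ^ 2)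
  have hxy : x ^ 2 + y ^ 2 = c ^ 2 := by
    rw [NNReal.sq_sqrt, tsub_add_cancel_of_le ((le_add_self).trans h.le)]
  have hax : a < x := by
    rw [← NNReal.sqrt_sq a, NNReal.sqrt_lt_sqrt, lt_tsub_iff_right]
    exact h
  calc sInf (f '' Ioi a) + f y ≤ f x + f y :=
        add_le_add_left (csInf_le (OrderBot.bddBelow _) (mem_image_of_mem f hax)) _
    _ ≤ f (NNReal.sqrt (x ^ 2 + y ^ 2)) := hsq x y
    _ = f c := by rw [hxy, NNReal.sqrt_sq]

theorem LowerSemicontinuous.le_of_forall_lt_le {α β : Type*} [TopologicalSpace α] [LinearOrder α]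
    [OrderTopology α] [DenselyOrdered α] [LinearOrder β] [TopologicalSpace β] [OrderTopology β]
    {f : α → β} (hf : LowerSemicontinuous f) {b : α} (hb : (Iio b).Nonempty) {C : β}
    (h : ∀ y < b, f y ≤ C) : f b ≤ C := by
  have : closure (Iio b) ⊆ f ⁻¹' Iic C := (hf.isClosed_preimage C).closure_subset_iff.mpr h
  exact this (closure_Iio' hb ▸ self_mem_Iic)

theorem stmt_17_general {V : Type*} [NormedAddCommGroup V] [InnerProductSpace ℝ V]
    (f : ℝ≥0 → ℝ≥0)
    (hsq : ∀ x y : ℝ≥0, f x + f y ≤ f (NNReal.sqrt (x ^ 2 + y ^ 2)))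
    (hlsc : LowerSemicontinuous f)
    (p q : V) (hpq : (0 : ℝ) ≤ inner ℝ p q) (hq : q ≠ 0) :
    sInf (f '' Set.Ioi ‖p‖₊) + f ‖q‖₊ ≤ f ‖p + q‖₊ := by
  have hnorm := nnnorm_sq_add_nnnorm_sq_le_of_inner_nonneg hpq
  have hq₀ : 0 < ‖q‖₊ := nnnorm_pos.mpr hq
  have key : ∀ y < ‖q‖₊, sInf (f '' Ioi ‖p‖₊) + f y ≤ f ‖p + q‖₊ := fun y hy =>
    sInf_image_Ioi_add_le_of_sq_add_sq_lt hsq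
      ((add_lt_add_right (pow_lt_pow_left₀ hy zero_le two_ne_zero) _).trans_le hnorm)
  have hS : sInf (f '' Ioi ‖p‖₊) ≤ f ‖p + q‖₊ := le_self_add.trans (key 0 hq₀)
  rw [← le_tsub_iff_left hS]
  exact hlsc.le_of_forall_lt_le ⟨0, hq₀⟩ fun y hy => (le_tsub_iff_left hS).mpr (key y hy)

/-- For `f : ℝ≥0 → ℝ≥0` square-superadditive, lower semicontinuous and
increasing, and `p, q` in a real inner product space with `⟨p,q⟩ ≥ 0` and `q ≠ 0`,
`f⁺(‖p‖) + f(‖q‖) ≤ f(‖p+q‖)`, where `f⁺(x) = inf {f e : e > x}`. -/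
theorem stmt_17 {V : Type*} [NormedAddCommGroup V] [InnerProductSpace ℝ V]
    (f : ℝ≥0 → ℝ≥0)
    (hsq : ∀ x y : ℝ≥0, f x + f y ≤ f (NNReal.sqrt (x ^ 2 + y ^ 2)))
    (hlsc : LowerSemicontinuous f)
    (hmono : StrictMono f)
    (p q : V) (hpq : (0 : ℝ) ≤ inner ℝ p q) (hq : q ≠ 0) :
    sInf (f '' Set.Ioi ‖p‖₊) + f ‖q‖₊ ≤ f ‖p + q‖₊ :=
  stmt_17_general f hsq hlsc p q hpq hq
end

section
/- In the hyperbolic orientation on H⁺ (x ⪯ y iff ‖x − y_⊥‖ ≤ y_h), a pair x, y ∈ H⁺ has a common left bound (some z ∈ H⁺ with z ⪯ x and z ⪯ y) if and only if ‖x_⊥ − y_⊥‖ < x_h + y_h. Moreover, every finite subset of H⁺ has a right bound. -/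
/-!
Write `z = z_⊥ + z_h h`. For `u ⊥ h`, Pythagoras gives `‖z - u‖² = ‖z_⊥ - u‖² + z_h²`. Hence a
common left bound `z ∈ H⁺` of `x` and `y` projects to a point `z_⊥` of the open balls of radii
`x_h`, `y_h` about `x_⊥`, `y_⊥`. Conversely, when these open balls meet, projecting a common point
onto `h^⊥` keeps it in both, and a small push along `h` then lands in `H⁺` without leaving them.
-/

open Metric Filter Topology
open scoped RealInnerProductSpace

section UnitVector

variable {E : Type*} [NormedAddCommGroup E] [InnerProductSpace ℝ E] {h : E}

theorem exists_inner_pos_mem_of_mem_nhds {w : E} (hh : h ≠ 0) (hw : 0 ≤ ⟪w, h⟫) {U : Set E}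
    (hU : U ∈ 𝓝 w) : ∃ z ∈ U, 0 < ⟪z, h⟫ := by
  have hlim : Tendsto (fun t : ℝ => w + t • h) (𝓝[>] 0) (𝓝 w) := by
    have hcont : Continuous (fun t : ℝ => w + t • h) := by fun_prop
    simpa using (hcont.tendsto 0).mono_left nhdsWithin_le_nhds
  obtain ⟨t, htU, ht⟩ := ((hlim.eventually_mem hU).and eventually_mem_nhdsWithin).exists
  refine ⟨_, htU, ?_⟩
  rw [inner_add_left, real_inner_smul_left, real_inner_self_eq_norm_sq]
  exact add_pos_of_nonneg_of_pos hw (mul_pos ht (pow_pos (norm_pos_iff.2 hh) 2))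

theorem inner_sub_inner_smul_unit (hh : ‖h‖ = 1) (x : E) : ⟪x - ⟪x, h⟫ • h, h⟫ = 0 := by
  rw [inner_sub_left, real_inner_smul_left, real_inner_self_eq_norm_sq, hh]
  ring

theorem inner_smul_unit (hh : ‖h‖ = 1) (c : ℝ) : ⟪c • h, h⟫ = c := by
  rw [real_inner_smul_left, real_inner_self_eq_norm_sq, hh]
  ring

theorem norm_sub_sq_eq_of_inner_eq_zero (hh : ‖h‖ = 1) {u : E} (hu : ⟪u, h⟫ = 0) (z : E) :
    ‖z - u‖ ^ 2 = ‖(z - ⟪z, h⟫ • h) - u‖ ^ 2 + ⟪z, h⟫ ^ 2 := by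
  have hperp : ⟪(z - ⟪z, h⟫ • h) - u, h⟫ = 0 := by
    rw [inner_sub_left, inner_sub_inner_smul_unit hh, hu, sub_zero]
  calc ‖z - u‖ ^ 2 = ‖((z - ⟪z, h⟫ • h) - u) + ⟪z, h⟫ • h‖ ^ 2 := by congr 2; abel
    _ = ‖(z - ⟪z, h⟫ • h) - u‖ ^ 2 + ⟪z, h⟫ ^ 2 := by
      rw [norm_add_sq_real, real_inner_smul_right, hperp, norm_smul, hh, Real.norm_eq_abs,
        mul_one, sq_abs, mul_zero, mul_zero, add_zero]

theorem dist_sub_inner_smul_unit_le (hh : ‖h‖ = 1) {u : E} (hu : ⟪u, h⟫ = 0) (z : E) :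
    dist (z - ⟪z, h⟫ • h) u ≤ dist z u := by
  rw [dist_eq_norm, dist_eq_norm, ← pow_le_pow_iff_left₀ (norm_nonneg _) (norm_nonneg _)
    two_ne_zero, norm_sub_sq_eq_of_inner_eq_zero hh hu z]
  exact le_add_of_nonneg_right (sq_nonneg _)

theorem dist_sub_inner_smul_unit_lt (hh : ‖h‖ = 1) {u z : E} (hu : ⟪u, h⟫ = 0)
    (hz : ⟪z, h⟫ ≠ 0) : dist (z - ⟪z, h⟫ • h) u < dist z u := by
  rw [dist_eq_norm, dist_eq_norm, ← pow_lt_pow_iff_left₀ (norm_nonneg _) (norm_nonneg _)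
    two_ne_zero, norm_sub_sq_eq_of_inner_eq_zero hh hu z]
  have hz2 : 0 < ⟪z, h⟫ ^ 2 := by positivity
  linarith

theorem exists_inner_pos_mem_closedBall_inter_iff (hh : ‖h‖ = 1) {u v : E} (hu : ⟪u, h⟫ = 0)
    (hv : ⟪v, h⟫ = 0) {a b : ℝ} (ha : 0 < a) (hb : 0 < b) :
    (∃ z, 0 < ⟪z, h⟫ ∧ z ∈ closedBall u a ∧ z ∈ closedBall v b) ↔ dist u v < a + b := by
  constructor
  · rintro ⟨z, hz, hzu, hzv⟩
    calc dist u v ≤ dist (z - ⟪z, h⟫ • h) u + dist (z - ⟪z, h⟫ • h) v := dist_triangle_left _ _ _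
      _ < a + b := add_lt_add ((dist_sub_inner_smul_unit_lt hh hu hz.ne').trans_le hzu)
          ((dist_sub_inner_smul_unit_lt hh hv hz.ne').trans_le hzv)
  · intro huv
    obtain ⟨z, hzu, hzv⟩ := exists_dist_lt_lt ha hb (by rwa [add_comm])
    have hw : z - ⟪z, h⟫ • h ∈ ball u a ∩ ball v b :=
      ⟨(dist_sub_inner_smul_unit_le hh hu z).trans_lt (by rwa [dist_comm]),
        (dist_sub_inner_smul_unit_le hh hv z).trans_lt hzv⟩
    obtain ⟨z', ⟨hz'u, hz'v⟩, hz'⟩ := exists_inner_pos_mem_of_mem_nhds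
      (norm_ne_zero_iff.1 (by rw [hh]; exact one_ne_zero)) (inner_sub_inner_smul_unit hh z).ge
      ((isOpen_ball.inter isOpen_ball).mem_nhds hw)
    exact ⟨z', hz', ball_subset_closedBall hz'u, ball_subset_closedBall hz'v⟩

theorem exists_inner_pos_forall_mem_closedBall (hh : ‖h‖ = 1) {P : Set E}
    (hP : Bornology.IsBounded P) :
    ∃ s, 0 < ⟪s, h⟫ ∧ ∀ p ∈ P, p ∈ closedBall (s - ⟪s, h⟫ • h) ⟪s, h⟫ := by
  obtain ⟨C, hC⟩ := isBounded_iff_forall_norm_le.1 hP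
  refine ⟨max C 1 • h, ?_, fun p hp => ?_⟩
  · rw [inner_smul_unit hh]
    exact lt_max_of_lt_right one_pos
  · rw [inner_smul_unit hh, sub_self, mem_closedBall, dist_zero_right]
    exact (hC p hp).trans (le_max_left _ _)

end UnitVector

theorem stmt_19_general {E : Type*} [NormedAddCommGroup E] [InnerProductSpace ℝ E]
    (h : E) (hh : ‖h‖ = 1)
    (le : E → E → Prop)
    (hle : ∀ x y : E, le x y ↔ ‖x - (y - (inner ℝ y h : ℝ) • h)‖ ≤ (inner ℝ y h : ℝ)) :
    (∀ x y : E, (0 : ℝ) < inner ℝ x h → (0 : ℝ) < inner ℝ y h →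
      ((∃ z : E, (0 : ℝ) < inner ℝ z h ∧ le z x ∧ le z y) ↔
        ‖(x - (inner ℝ x h : ℝ) • h) - (y - (inner ℝ y h : ℝ) • h)‖ <
          (inner ℝ x h : ℝ) + (inner ℝ y h : ℝ))) ∧
    (∀ P : Set E, P.Finite → (∀ p ∈ P, (0 : ℝ) < inner ℝ p h) →
      ∃ s : E, (0 : ℝ) < inner ℝ s h ∧ ∀ p ∈ P, le p s) := by
  have hle_ball : ∀ x y, le x y ↔ x ∈ closedBall (y - ⟪y, h⟫ • h) ⟪y, h⟫ := fun x y => by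
    rw [hle, mem_closedBall, dist_eq_norm]
  refine ⟨fun x y hx hy => ?_, fun P hP _ => ?_⟩
  · simp only [hle_ball, ← dist_eq_norm]
    exact exists_inner_pos_mem_closedBall_inter_iff hh (inner_sub_inner_smul_unit hh x)
      (inner_sub_inner_smul_unit hh y) hx hy
  · simpa only [hle_ball] using exists_inner_pos_forall_mem_closedBall hh hP.isBounded

/-- In the hyperbolic orientation on `H⁺`, a pair `x, y` has a common left
bound iff `‖x_⊥ − y_⊥‖ < x_h + y_h`; moreover every finite subset of `H⁺` has a right
bound in `H⁺`. -/
theorem stmt_19 {E : Type*} [NormedAddCommGroup E] [InnerProductSpace ℝ E] [CompleteSpace E]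
    (hdim : 2 ≤ Module.rank ℝ E)
    (h : E) (hh : ‖h‖ = 1)
    (le : E → E → Prop)
    (hle : ∀ x y : E, le x y ↔ ‖x - (y - (inner ℝ y h : ℝ) • h)‖ ≤ (inner ℝ y h : ℝ)) :
    (∀ x y : E, (0 : ℝ) < inner ℝ x h → (0 : ℝ) < inner ℝ y h →
      ((∃ z : E, (0 : ℝ) < inner ℝ z h ∧ le z x ∧ le z y) ↔
        ‖(x - (inner ℝ x h : ℝ) • h) - (y - (inner ℝ y h : ℝ) • h)‖ <
          (inner ℝ x h : ℝ) + (inner ℝ y h : ℝ))) ∧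
    (∀ P : Set E, P.Finite → (∀ p ∈ P, (0 : ℝ) < inner ℝ p h) →
      ∃ s : E, (0 : ℝ) < inner ℝ s h ∧ ∀ p ∈ P, le p s) :=
  stmt_19_general h hh le hle
end
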